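/- In a stochastic game, player 1 is almost-sure weakly synchronizing in T from state q in G if and only if for every p ≥ 1 there exists 0 ≤ i ≤ p−1 such that player 1 is almost-sure weakly synchronizing in T × {0} from ⟨q, i⟩ in the counter game G × [p]. -/

import Mathlib

/-!
From `(q, i)` the counter of `G × [p]` is deterministic, equal to `i - t` modulo `p` at time `t`,
so plays of `G × [p]` are plays of `G` tagged with the time modulo `p`, and strategies transfer
both ways. Taking `p = 1` gives one direction. For the other, let `σ` win in `G` and
suppose every start `(q, i)` of `G × [p]` is spoiled by some `τᵢ` against `σ` made blind to the
counter. Against the behavioural mixture of the `τᵢ` with weight `1/p` each, whose outcome is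
their average, `σ` reaches mass `1 - ε/p` in `T` at arbitrarily late times `t`; there all `τᵢ`
leave mass `≥ 1 - ε` in `T`, in particular `τᵢ` for `i = t mod p`, whose counter is `0` at `t`:
for `ε` below all spoiling margins, this contradicts the choice of `τᵢ`.
-/

open Finset

/-- A two-player stochastic game: transition kernel `δ q a b q'`. -/
structure Game (Q A : Type) where
  δ : Q → A → A → Q → ℝ

/-- Validity of the transition kernel: a probability distribution on `Q` for each `q,a,b`. -/
def IsGame {Q A : Type} [Fintype Q] (G : Game Q A) : Prop :=
  (∀ q a b q', 0 ≤ G.δ q a b q') ∧ (∀ q a b, (∑ q' : Q, G.δ q a b q') = 1)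

/-- A probability distribution over a finite set. -/
def IsDist {Q : Type} [Fintype Q] (d : Q → ℝ) : Prop :=
  (∀ q, 0 ≤ d q) ∧ (∑ q : Q, d q) = 1

/-- Randomized player-1 strategies: map (reversed) state histories to distributions on actions. -/
abbrev Strat1 (Q A : Type) := List Q → A → ℝ
/-- Randomized player-2 strategies: also see the action chosen by player 1. -/
abbrev Strat2 (Q A : Type) := List Q → A → A → ℝ

def IsStrat1 {Q A : Type} [Fintype A] (σ : Strat1 Q A) : Prop :=
  ∀ h, (∀ a, 0 ≤ σ h a) ∧ (∑ a : A, σ h a) = 1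

def IsStrat2 {Q A : Type} [Fintype A] (τ : Strat2 Q A) : Prop :=
  ∀ h a, (∀ b, 0 ≤ τ h a b) ∧ (∑ b : A, τ h a b) = 1

/-- Probability of a finite state history (in reverse chronological order:
the head is the current state), with the actions marginalized out. -/
def hprob {Q A : Type} [Fintype A] (G : Game Q A) (d0 : Q → ℝ)
    (σ : Strat1 Q A) (τ : Strat2 Q A) : List Q → ℝ
  | [] => 1
  | [q] => d0 q
  | q :: q' :: h =>
      (∑ a : A, ∑ b : A, σ (q' :: h) a * τ (q' :: h) a b * G.δ q' a b q) *
        hprob G d0 σ τ (q' :: h)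

/-- The outcome sequence of distributions: probability to be in state `q` after `i` rounds. -/
def outSeq {Q A : Type} [Fintype Q] [Fintype A] (G : Game Q A) (d0 : Q → ℝ)
    (σ : Strat1 Q A) (τ : Strat2 Q A) (i : ℕ) (q : Q) : ℝ :=
  ∑ h : Fin i → Q, hprob G d0 σ τ (q :: (List.ofFn h).reverse)

/-- Probability mass of a set of states. -/
def mass {Q : Type} (d : Q → ℝ) (T : Finset Q) : ℝ := ∑ q ∈ T, d q

/-- The four synchronizing modes, on a sequence of probability masses. -/
def AlwaysSync (m : ℕ → ℝ) (ε : ℝ) : Prop := ∀ i, 1 - ε ≤ m i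
def EventSync (m : ℕ → ℝ) (ε : ℝ) : Prop := ∃ i, 1 - ε ≤ m i
def WeaklySync (m : ℕ → ℝ) (ε : ℝ) : Prop := ∀ N, ∃ i, N ≤ i ∧ 1 - ε ≤ m i
def StronglySync (m : ℕ → ℝ) (ε : ℝ) : Prop := ∃ N, ∀ i, N ≤ i → 1 - ε ≤ m i

/-- Sure winning region for a synchronizing mode `sync`: some player-1 strategy ensures
`1`-synchronization against all player-2 strategies. -/
def SureWin {Q A : Type} [Fintype Q] [Fintype A] (G : Game Q A) (T : Finset Q)
    (sync : (ℕ → ℝ) → ℝ → Prop) : Set (Q → ℝ) :=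
  {d0 | IsDist d0 ∧ ∃ σ, IsStrat1 σ ∧ ∀ τ, IsStrat2 τ →
    sync (fun i => mass (outSeq G d0 σ τ i) T) 0}

/-- Almost-sure winning region for a synchronizing mode `sync`: some player-1 strategy
ensures `(1-ε)`-synchronization for all `ε > 0` against all player-2 strategies. -/
def ASWin {Q A : Type} [Fintype Q] [Fintype A] (G : Game Q A) (T : Finset Q)
    (sync : (ℕ → ℝ) → ℝ → Prop) : Set (Q → ℝ) :=
  {d0 | IsDist d0 ∧ ∃ σ, IsStrat1 σ ∧ ∀ τ, IsStrat2 τ →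
    ∀ ε : ℝ, 0 < ε → sync (fun i => mass (outSeq G d0 σ τ i) T) ε}

/-- Dirac distribution. -/
def dirac {Q : Type} [DecidableEq Q] (q : Q) : Q → ℝ := fun q' => if q' = q then 1 else 0

/-- The counter game `G × [p]`: the tracking counter is decremented modulo `p` along
every transition. -/
def counterGame {Q A : Type} (G : Game Q A) (p : ℕ) : Game (Q × Fin p) A where
  δ := fun x a b y => if (y.2 : ℕ) = ((x.2 : ℕ) + p - 1) % p then G.δ x.1 a b y.1 else 0

theorem List.reverse_ofFn_succ {α : Type*} {n : ℕ} (g : Fin (n + 1) → α) :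
    (List.ofFn g).reverse = g (Fin.last n) :: (List.ofFn (Fin.init g)).reverse := by
  rw [List.ofFn_succ']
  simp only [List.concat_eq_append, List.reverse_append, List.reverse_cons, List.reverse_nil,
    List.nil_append, List.cons_append]
  rfl

namespace Game

variable {Q A : Type}

def stepProb [Fintype A] (G : Game Q A) (σ : Strat1 Q A) (τ : Strat2 Q A)
    (y : Q) (h : List Q) (x : Q) : ℝ :=
  ∑ a : A, ∑ b : A, σ (y :: h) a * τ (y :: h) a b * G.δ y a b x

section Basic

variable [Fintype A] (G : Game Q A) (d0 : Q → ℝ) (σ : Strat1 Q A) (τ : Strat2 Q A)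

theorem hprob_cons_cons (x y : Q) (h : List Q) :
    hprob G d0 σ τ (x :: y :: h) = G.stepProb σ τ y h x * hprob G d0 σ τ (y :: h) :=
  rfl

theorem stepProb_nonneg (hG : ∀ q a b q', 0 ≤ G.δ q a b q') (hσ : IsStrat1 σ)
    (hτ : IsStrat2 τ) (y : Q) (h : List Q) (x : Q) : 0 ≤ G.stepProb σ τ y h x :=
  sum_nonneg fun a _ => sum_nonneg fun b _ =>
    mul_nonneg (mul_nonneg ((hσ _).1 a) ((hτ _ a).1 b)) (hG _ _ _ _)

theorem sum_stepProb [Fintype Q] (hG : IsGame G) (hσ : IsStrat1 σ) (hτ : IsStrat2 τ)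
    (y : Q) (h : List Q) : ∑ x : Q, G.stepProb σ τ y h x = 1 := by
  simp only [stepProb]
  rw [sum_comm]
  refine ((sum_congr rfl fun a _ => ?_).trans (hσ (y :: h)).2)
  rw [sum_comm]
  refine (sum_congr rfl fun b _ => ?_).trans (by rw [← mul_sum, (hτ (y :: h) a).2, mul_one])
  rw [← mul_sum, hG.2, mul_one]

theorem hprob_nonneg (hG : ∀ q a b q', 0 ≤ G.δ q a b q') (hd : ∀ q, 0 ≤ d0 q)
    (hσ : IsStrat1 σ) (hτ : IsStrat2 τ) : ∀ l, 0 ≤ hprob G d0 σ τ l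
  | [] => zero_le_one
  | [x] => hd x
  | x :: y :: h => by
    rw [hprob_cons_cons]
    exact mul_nonneg (G.stepProb_nonneg σ τ hG hσ hτ y h x)
      (hprob_nonneg hG hd hσ hτ (y :: h))

end Basic

section Outcome

variable [Fintype Q] [Fintype A] (G : Game Q A) (d0 : Q → ℝ) (σ : Strat1 Q A) (τ : Strat2 Q A)

theorem outSeq_succ (t : ℕ) (x : Q) :
    outSeq G d0 σ τ (t + 1) x
      = ∑ y : Q, ∑ g : Fin t → Q, hprob G d0 σ τ (x :: y :: (List.ofFn g).reverse) := by
  rw [outSeq, ← (Fin.snocEquiv fun _ => Q).sum_comp, Fintype.sum_prod_type]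
  exact sum_congr rfl fun y _ => sum_congr rfl fun g _ => by
    rw [show (Fin.snocEquiv fun _ => Q) (y, g) = Fin.snoc g y from rfl, List.reverse_ofFn_succ,
      Fin.snoc_last, Fin.init_snoc]

theorem outSeq_nonneg (hG : IsGame G) (hd : IsDist d0) (hσ : IsStrat1 σ) (hτ : IsStrat2 τ)
    (t : ℕ) (x : Q) : 0 ≤ outSeq G d0 σ τ t x :=
  sum_nonneg fun _ _ => hprob_nonneg G d0 σ τ hG.1 hd.1 hσ hτ _

theorem sum_outSeq (hG : IsGame G) (hd : IsDist d0) (hσ : IsStrat1 σ) (hτ : IsStrat2 τ) :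
    ∀ t, ∑ x : Q, outSeq G d0 σ τ t x = 1
  | 0 => by simpa [outSeq, hprob] using hd.2
  | t + 1 => by
    simp only [outSeq_succ, hprob_cons_cons]
    rw [sum_comm, ← sum_outSeq hG hd hσ hτ t]
    refine sum_congr rfl fun y _ => ?_
    rw [sum_comm, outSeq]
    simp only [← sum_mul, sum_stepProb G σ τ hG hσ hτ, one_mul]

theorem mass_le_one (hG : IsGame G) (hd : IsDist d0) (hσ : IsStrat1 σ) (hτ : IsStrat2 τ)
    (t : ℕ) (T : Finset Q) : mass (outSeq G d0 σ τ t) T ≤ 1 :=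
  calc mass (outSeq G d0 σ τ t) T ≤ ∑ x : Q, outSeq G d0 σ τ t x :=
        sum_le_sum_of_subset_of_nonneg (subset_univ T)
          fun x _ _ => outSeq_nonneg G d0 σ τ hG hd hσ hτ t x
    _ = 1 := sum_outSeq G d0 σ τ hG hd hσ hτ t

end Outcome

theorem isDist_dirac [Fintype Q] [DecidableEq Q] (q : Q) : IsDist (dirac q) :=
  ⟨fun _ => by unfold dirac; split_ifs <;> norm_num, by simp [dirac]⟩

section Mix

variable [Fintype A] {ι : Type} [Fintype ι] [Nonempty ι]

/-- Behavioural form of the uniform mixture of the strategies `τs`: after history `h`,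
follow `τs j` with probability proportional to the probability of `h` under `τs j`. -/
noncomputable def mixStrat (G : Game Q A) (d0 : Q → ℝ) (σ : Strat1 Q A)
    (τs : ι → Strat2 Q A) : Strat2 Q A := fun h a b =>
  if ∑ j, hprob G d0 σ (τs j) h = 0 then τs (Classical.arbitrary ι) h a b
  else (∑ j, hprob G d0 σ (τs j) h * τs j h a b) / ∑ j, hprob G d0 σ (τs j) h

variable (G : Game Q A) (d0 : Q → ℝ) (σ : Strat1 Q A) (τs : ι → Strat2 Q A)

theorem isStrat2_mixStrat (hG : ∀ q a b q', 0 ≤ G.δ q a b q') (hd : ∀ q, 0 ≤ d0 q)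
    (hσ : IsStrat1 σ) (hτs : ∀ j, IsStrat2 (τs j)) : IsStrat2 (G.mixStrat d0 σ τs) := by
  intro h a
  have hw j : 0 ≤ hprob G d0 σ (τs j) h := hprob_nonneg G d0 σ (τs j) hG hd hσ (hτs j) h
  by_cases hS : ∑ j, hprob G d0 σ (τs j) h = 0
  · simpa only [mixStrat, if_pos hS] using hτs _ h a
  · simp only [mixStrat, if_neg hS]
    refine ⟨fun b => div_nonneg (sum_nonneg fun j _ => mul_nonneg (hw j) ((hτs j h a).1 b))
      (sum_nonneg fun j _ => hw j), ?_⟩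
    rw [← sum_div, sum_comm, div_eq_one_iff_eq hS]
    simp only [← mul_sum, (hτs _ h a).2, mul_one]

theorem stepProb_mixStrat_mul (y : Q) (h : List Q) (x : Q)
    (hS : ∑ j, hprob G d0 σ (τs j) (y :: h) ≠ 0) :
    G.stepProb σ (G.mixStrat d0 σ τs) y h x * ∑ j, hprob G d0 σ (τs j) (y :: h)
      = ∑ j, hprob G d0 σ (τs j) (y :: h) * G.stepProb σ (τs j) y h x := by
  calc _ = ∑ a : A, ∑ b : A, ∑ j, hprob G d0 σ (τs j) (y :: h) *
        (σ (y :: h) a * τs j (y :: h) a b * G.δ y a b x) := by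
        simp only [stepProb, mixStrat, if_neg hS, sum_mul]
        refine sum_congr rfl fun a _ => sum_congr rfl fun b _ => ?_
        field_simp
        rw [mul_sum, sum_mul]
        exact sum_congr rfl fun j _ => by ring
    _ = _ := by
        simp only [stepProb, mul_sum]
        exact (sum_congr rfl fun a _ => sum_comm).trans sum_comm

theorem card_mul_hprob_mixStrat (hG : ∀ q a b q', 0 ≤ G.δ q a b q') (hd : ∀ q, 0 ≤ d0 q)
    (hσ : IsStrat1 σ) (hτs : ∀ j, IsStrat2 (τs j)) :
    ∀ l, (Fintype.card ι : ℝ) * hprob G d0 σ (G.mixStrat d0 σ τs) l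
      = ∑ j, hprob G d0 σ (τs j) l
  | [] => by simp [hprob]
  | [x] => by simp [hprob]
  | x :: y :: h => by
    rw [hprob_cons_cons, mul_left_comm, card_mul_hprob_mixStrat hG hd hσ hτs (y :: h)]
    simp only [hprob_cons_cons]
    by_cases hS : ∑ j, hprob G d0 σ (τs j) (y :: h) = 0
    · have hzero j : hprob G d0 σ (τs j) (y :: h) = 0 :=
        (sum_eq_zero_iff_of_nonneg fun j _ =>
          hprob_nonneg G d0 σ (τs j) hG hd hσ (hτs j) _).1 hS j (mem_univ j)
      simp [hzero]
    · rw [stepProb_mixStrat_mul G d0 σ τs y h x hS]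
      exact sum_congr rfl fun j _ => mul_comm _ _

theorem card_mul_mass_mixStrat [Fintype Q] (hG : ∀ q a b q', 0 ≤ G.δ q a b q')
    (hd : ∀ q, 0 ≤ d0 q) (hσ : IsStrat1 σ) (hτs : ∀ j, IsStrat2 (τs j)) (t : ℕ) (T : Finset Q) :
    (Fintype.card ι : ℝ) * mass (outSeq G d0 σ (G.mixStrat d0 σ τs) t) T
      = ∑ j, mass (outSeq G d0 σ (τs j) t) T := by
  simp only [mass, outSeq, mul_sum, card_mul_hprob_mixStrat G d0 σ τs hG hd hσ hτs]
  exact (sum_congr rfl fun x _ => sum_comm).trans sum_comm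

theorem exists_ge_forall_one_sub_le_mass [Fintype Q] (T : Finset Q) (hG : IsGame G)
    (hd : IsDist d0) (hσ : IsStrat1 σ)
    (hwin : ∀ τ, IsStrat2 τ → ∀ ε, 0 < ε → WeaklySync (fun t => mass (outSeq G d0 σ τ t) T) ε)
    (hτs : ∀ j, IsStrat2 (τs j)) {ε : ℝ} (hε : 0 < ε) (N : ℕ) :
    ∃ t, N ≤ t ∧ ∀ j, 1 - ε ≤ mass (outSeq G d0 σ (τs j) t) T := by
  classical
  set n : ℝ := (Fintype.card ι : ℝ)
  have hn : 0 < n := Nat.cast_pos.2 Fintype.card_pos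
  obtain ⟨t, hNt, hmix⟩ := hwin _ (G.isStrat2_mixStrat d0 σ τs hG.1 hd.1 hσ hτs)
    (ε / n) (div_pos hε hn) N
  refine ⟨t, hNt, fun j => ?_⟩
  have hsum : ∑ i, mass (outSeq G d0 σ (τs i) t) T
      ≤ mass (outSeq G d0 σ (τs j) t) T + (n - 1) := by
    rw [← add_sum_erase _ _ (mem_univ j)]
    have hrest := sum_le_card_nsmul (univ.erase j) _ 1
      fun i _ => mass_le_one G d0 σ (τs i) hG hd hσ (hτs i) t T
    rw [card_erase_of_mem (mem_univ j), card_univ, nsmul_one,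
      Nat.cast_sub Fintype.card_pos, Nat.cast_one] at hrest
    linarith
  have hlow := mul_le_mul_of_nonneg_left hmix hn.le
  rw [card_mul_mass_mixStrat G d0 σ τs hG.1 hd.1 hσ hτs, mul_sub, mul_div_cancel₀ _ hn.ne',
    mul_one] at hlow
  linarith

end Mix

section Counter

variable {p : ℕ}

/-- `i - k` modulo `p`, written with `p - 1` to avoid truncated subtraction: the counter of
`G × [p]` after `k` steps from `i`. -/
def counterAt (i : Fin p) (k : ℕ) : Fin p :=
  ⟨(i + (p - 1) * k) % p, Nat.mod_lt _ i.pos⟩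

theorem counterAt_zero (i : Fin p) : counterAt i 0 = i := by
  simp [counterAt, Nat.mod_eq_of_lt i.isLt]

theorem counterAt_succ (i : Fin p) (k : ℕ) :
    ((counterAt i k : ℕ) + p - 1) % p = counterAt i (k + 1) := by
  have hp := i.pos
  simp only [counterAt, Nat.add_sub_assoc hp, Nat.mod_add_mod]
  congr 1
  ring

theorem counterAt_mod_self (hp : 0 < p) (t : ℕ) :
    counterAt ⟨t % p, Nat.mod_lt t hp⟩ t = ⟨0, hp⟩ := by
  ext
  simp only [counterAt]
  rw [Nat.mod_add_mod, add_comm, ← Nat.add_one_mul, Nat.sub_add_cancel hp, Nat.mul_mod_right]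

def withCounter (i : Fin p) : List Q → List (Q × Fin p)
  | [] => []
  | x :: l => (x, counterAt i l.length) :: withCounter i l

theorem map_fst_withCounter (i : Fin p) : ∀ l : List Q, (withCounter i l).map Prod.fst = l
  | [] => rfl
  | x :: l => by rw [withCounter, List.map_cons, map_fst_withCounter i l]

theorem comp_map_fst_comp_withCounter {β : Type*} (i : Fin p) (f : List Q → β) :
    (f ∘ List.map Prod.fst) ∘ withCounter i = f := by
  funext l
  simp only [Function.comp_apply, map_fst_withCounter]

theorem withCounter_reverse_ofFn (i : Fin p) :
    ∀ {t : ℕ} (g : Fin t → Q),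
      withCounter i (List.ofFn g).reverse = (List.ofFn fun j => (g j, counterAt i j)).reverse
  | 0, _ => rfl
  | t + 1, g => by
    rw [List.reverse_ofFn_succ, List.reverse_ofFn_succ, withCounter, withCounter_reverse_ofFn i,
      List.length_reverse, List.length_ofFn]
    rfl

theorem withCounter_cons_reverse_ofFn (i : Fin p) {t : ℕ} (x : Q) (g : Fin t → Q) :
    withCounter i (x :: (List.ofFn g).reverse)
      = (x, counterAt i t) :: (List.ofFn fun j => (g j, counterAt i j)).reverse := by
  rw [withCounter, withCounter_reverse_ofFn, List.length_reverse, List.length_ofFn]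

end Counter

section CounterGame

variable [Fintype A] [DecidableEq Q] {p : ℕ}
  (G : Game Q A) (q : Q) (i : Fin p) (σ' : Strat1 (Q × Fin p) A) (τ' : Strat2 (Q × Fin p) A)

theorem hprob_counterGame_withCounter : ∀ l : List Q,
    hprob (counterGame G p) (dirac (q, i)) σ' τ' (withCounter i l)
      = hprob G (dirac q) (σ' ∘ withCounter i) (τ' ∘ withCounter i) l
  | [] => rfl
  | [x] => by simp [withCounter, hprob, dirac, counterAt_zero]
  | x :: y :: l => by
    rw [hprob_cons_cons G, ← hprob_counterGame_withCounter (y :: l), withCounter, withCounter,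
      hprob_cons_cons]
    congr 1
    simp only [stepProb, counterGame, withCounter, List.length_cons, counterAt_succ, if_true,
      Function.comp_apply]

theorem eq_withCounter_of_hprob_counterGame_ne_zero : ∀ H : List (Q × Fin p),
    hprob (counterGame G p) (dirac (q, i)) σ' τ' H ≠ 0 → H = withCounter i (H.map Prod.fst)
  | [], _ => rfl
  | [x], hx => by
    have : x = (q, i) := by by_contra hne; simp [hprob, dirac, hne] at hx
    simp [withCounter, counterAt_zero, this]
  | x :: y :: H, hx => by
    rw [hprob_cons_cons, mul_ne_zero_iff] at hx
    have htail := eq_withCounter_of_hprob_counterGame_ne_zero (y :: H) hx.2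
    have hy : y.2 = counterAt i H.length := by
      simpa [withCounter] using congrArg (fun l => (List.head? l).map Prod.snd) htail
    have hx2 : (x.2 : ℕ) = ((y.2 : ℕ) + p - 1) % p := by
      by_contra hne
      simp [stepProb, counterGame, hne] at hx
    rw [List.map_cons, withCounter, ← htail, List.length_map, List.length_cons]
    congr 1
    exact Prod.ext rfl (Fin.ext (by rw [hx2, hy, counterAt_succ]))

theorem counter_eq_of_hprob_counterGame_ne_zero {t : ℕ} (x : Q) (c : Fin p) (g : Fin t → Q)
    (e : Fin t → Fin p)
    (h : hprob (counterGame G p) (dirac (q, i)) σ' τ'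
      ((x, c) :: (List.ofFn fun j => (g j, e j)).reverse) ≠ 0) :
    c = counterAt i t ∧ e = fun j : Fin t => counterAt i j := by
  have hH := eq_withCounter_of_hprob_counterGame_ne_zero G q i σ' τ' _ h
  rw [List.map_cons, List.map_reverse, List.map_ofFn, withCounter_cons_reverse_ofFn] at hH
  obtain ⟨hc, he⟩ := List.cons_eq_cons.1 hH
  have he' := List.ofFn_injective (List.reverse_injective he)
  exact ⟨congrArg Prod.snd hc, funext fun j => congrArg Prod.snd (congrFun he' j)⟩

theorem outSeq_counterGame [Fintype Q] (t : ℕ) (x : Q) (c : Fin p) :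
    outSeq (counterGame G p) (dirac (q, i)) σ' τ' t (x, c)
      = if c = counterAt i t then
          outSeq G (dirac q) (σ' ∘ withCounter i) (τ' ∘ withCounter i) t x
        else 0 := by
  rw [outSeq, ← (Equiv.arrowProdEquivProdArrow (Fin t) (fun _ => Q) (fun _ => Fin p)).symm.sum_comp,
    Fintype.sum_prod_type]
  split_ifs with hc
  · refine sum_congr rfl fun g _ => ?_
    rw [Fintype.sum_eq_single fun j : Fin t => counterAt i j]
    · rw [hc]
      exact (congrArg _ (withCounter_cons_reverse_ofFn i x g)).symm.trans
        (hprob_counterGame_withCounter G q i σ' τ' _)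
    · exact fun e he => not_not.1 fun hne =>
        he (counter_eq_of_hprob_counterGame_ne_zero G q i σ' τ' x c g e hne).2
  · exact sum_eq_zero fun g _ => sum_eq_zero fun e _ => not_not.1 fun hne =>
      hc (counter_eq_of_hprob_counterGame_ne_zero G q i σ' τ' x c g e hne).1

theorem mass_counterGame [Fintype Q] (hp : 0 < p) (t : ℕ) (T : Finset Q) :
    mass (outSeq (counterGame G p) (dirac (q, i)) σ' τ' t) (T.image fun q' => (q', ⟨0, hp⟩))
      = if counterAt i t = ⟨0, hp⟩ then
          mass (outSeq G (dirac q) (σ' ∘ withCounter i) (τ' ∘ withCounter i) t) T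
        else 0 := by
  rw [mass, sum_image fun _ _ _ _ h => (Prod.ext_iff.1 h).1]
  simp only [outSeq_counterGame, eq_comm (a := (⟨0, hp⟩ : Fin p))]
  split_ifs <;> simp [mass]

end CounterGame

variable [Fintype Q] [Fintype A] [DecidableEq Q] (G : Game Q A) (q : Q)
  (T : Finset Q)

theorem exists_mem_ASWin_counterGame (hG : IsGame G) (h : dirac q ∈ ASWin G T WeaklySync)
    {p : ℕ} (hp : 0 < p) :
    ∃ i : Fin p, dirac (q, i) ∈
      ASWin (counterGame G p) (T.image fun q' => (q', ⟨0, hp⟩)) WeaklySync := by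
  obtain ⟨hd, σ, hσ, hwin⟩ := h
  by_contra! hlose
  have hspoil (i : Fin p) : ∃ τ', IsStrat2 τ' ∧ ∃ ε > 0, ∃ N, ∀ t ≥ N,
      mass (outSeq (counterGame G p) (dirac (q, i)) (σ ∘ List.map Prod.fst) τ' t)
        (T.image fun q' => (q', ⟨0, hp⟩)) < 1 - ε := by
    by_contra! hwin'
    exact hlose i ⟨isDist_dirac _, σ ∘ List.map Prod.fst, fun _ => hσ _, hwin'⟩
  choose τ' hτ' ε hε N hN using hspoil
  have : Nonempty (Fin p) := ⟨⟨0, hp⟩⟩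
  obtain ⟨t, hNt, hmass⟩ := exists_ge_forall_one_sub_le_mass G (dirac q) σ
    (fun i => τ' i ∘ withCounter i) T hG hd hσ hwin (fun i _ a => hτ' i _ a)
    ((lt_inf'_iff univ_nonempty).2 fun i _ => hε i) (univ.sup N)
  set i : Fin p := ⟨t % p, Nat.mod_lt t hp⟩
  have hlt := hN i t ((le_sup (mem_univ i)).trans hNt)
  rw [mass_counterGame, if_pos (counterAt_mod_self hp t), comp_map_fst_comp_withCounter] at hlt
  linarith [hmass i, inf'_le ε (mem_univ i)]

theorem mem_ASWin_of_mem_ASWin_counterGame_one (i : Fin 1)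
    (h : dirac (q, i) ∈ ASWin (counterGame G 1) (T.image fun q' => (q', ⟨0, one_pos⟩))
      WeaklySync) :
    dirac q ∈ ASWin G T WeaklySync := by
  obtain ⟨-, σ', hσ', hwin⟩ := h
  refine ⟨isDist_dirac q, σ' ∘ withCounter i, fun _ => hσ' _, fun τ hτ ε hε N => ?_⟩
  obtain ⟨t, hNt, ht⟩ := hwin (τ ∘ List.map Prod.fst) (fun _ => hτ _) ε hε N
  refine ⟨t, hNt, ?_⟩
  beta_reduce at ht ⊢
  rwa [mass_counterGame, if_pos (Subsingleton.elim _ _), comp_map_fst_comp_withCounter] at ht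

end Game

theorem as_weakly_iff_counter_game {Q A : Type} [Fintype Q] [Fintype A] [DecidableEq Q]
    (G : Game Q A) (hG : IsGame G) (q : Q) (T : Finset Q) :
    dirac q ∈ ASWin G T WeaklySync ↔
      ∀ (p : ℕ) (hp : 0 < p), ∃ i : Fin p,
        dirac ((q, i) : Q × Fin p) ∈
          ASWin (counterGame G p)
            (T.image (fun q' => ((q', ⟨0, hp⟩) : Q × Fin p))) WeaklySync := by
  refine ⟨fun h p hp => G.exists_mem_ASWin_counterGame q T hG h hp, fun h => ?_⟩
  obtain ⟨i, hi⟩ := h 1 one_pos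
  exact G.mem_ASWin_of_mem_ASWin_counterGame_one q T i hi
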